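/- Total microstates are irreducible: for every constructive event E and every total microstate p (no input wire is ⊥ and every output color is either ∘∅ or •k for some k), there is no microstate p' with E ⊢ p ⇝ p'. -/
import Mathlib

namespace EsterelMicro

/-- Signals are represented by natural numbers. -/
abbrev Signal := ℕ

/-- Scott booleans: unknown (⊥), true (+), false (−). -/
inductive SB : Type
  | bot
  | pos
  | neg
  deriving DecidableEq

namespace SB

/-- Scott (parallel) conjunction. -/
def and : SB → SB → SB
  | .neg, _ => .neg
  | _, .neg => .neg
  | .pos, .pos => .pos
  | _, _ => .bot

/-- Scott (parallel) disjunction. -/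
def or : SB → SB → SB
  | .pos, _ => .pos
  | _, .pos => .pos
  | .neg, .neg => .neg
  | _, _ => .bot

/-- Scott negation. -/
def not : SB → SB
  | .pos => .neg
  | .neg => .pos
  | .bot => .bot

/-- The flat information order on Scott booleans: `⊥ < +`, `⊥ < −`. -/
def le (a b : SB) : Prop := a = .bot ∨ a = b

/-- Strict flat information order. -/
def lt (a b : SB) : Prop := a = .bot ∧ b ≠ .bot

end SB

/-- A constructive event maps signals to Scott booleans (`none` = not in scope). -/
abbrev CEvent := Signal → Option SB

/-- The status of a signal in an event (`⊥` if the signal is not in scope). -/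
def evalE (E : CEvent) (s : Signal) : SB := (E s).getD .bot

/-- Update the status of a signal in an event. -/
def CEvent.update (E : CEvent) (s : Signal) (v : SB) : CEvent :=
  fun t => if t = s then some v else E t

/-- Input colors: the (precomputed) boolean Sel wire and the Scott-boolean
Go, Res, and Susp wires. -/
structure InColor where
  sel : Bool
  go : SB
  res : SB
  susp : SB
  deriving DecidableEq

namespace InColor

/-- Information order on input colors: equal Sel, componentwise flat order. -/
def le (i j : InColor) : Prop :=
  i.sel = j.sel ∧ i.go.le j.go ∧ i.res.le j.res ∧ i.susp.le j.susp

/-- Strict information order on input colors. -/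
def lt (i j : InColor) : Prop := i.le j ∧ i ≠ j

/-- The microstate is executed: started fresh or resumed
(`Go⁺ ∨ (Sel⁺ ∧ Res⁺)`). -/
def gores (i : InColor) : Prop := i.go = .pos ∨ (i.sel = true ∧ i.res = .pos)

/-- The microstate is not executed (`Go⁻ ∧ (Sel⁻ ∨ Res⁻)`). -/
def nogores (i : InColor) : Prop := i.go = .neg ∧ (i.sel = false ∨ i.res = .neg)

/-- Starting an inert statement: `Sel⁻, Go⁺`. -/
def isGo (i : InColor) : Prop := i.sel = false ∧ i.go = .pos

/-- Leaving dead an inert statement: `Sel⁻, Go⁻`. -/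
def isNoGo (i : InColor) : Prop := i.sel = false ∧ i.go = .neg

/-- Resuming an active statement: `Sel⁺, Res⁺, Susp⁻`. -/
def isRes (i : InColor) : Prop := i.sel = true ∧ i.res = .pos ∧ i.susp = .neg

end InColor

/-- Output colors (one-hot encoding of the completion code): `black k` means
the k-th completion wire is 1, `white K` means all completion wires outside
the finite set `K` are 0 (and no wire is known to be 1). -/
inductive OutColor : Type
  | black (k : ℕ)
  | white (K : Finset ℕ)
  deriving DecidableEq

namespace OutColor

/-- Information order on output colors. -/
def le : OutColor → OutColor → Prop
  | .white K, .white L => L ⊆ K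
  | .white K, .black k => k ∈ K
  | .black k, .black l => k = l
  | .black _, .white _ => False

/-- Strict information order on output colors. -/
def lt (a b : OutColor) : Prop := a.le b ∧ a ≠ b

/-- Union of output colors (used by the end rules of tests and sequences). -/
def union : OutColor → OutColor → OutColor
  | .white K, .white L => .white (K ∪ L)
  | .black k, .white K => if K = ∅ then .black k else .white (insert k K)
  | .white K, .black k => if K = ∅ then .black k else .white (insert k K)
  | .black k, .black l => .black (max k l)

/-- Map a function over the possible completion codes of an output color. -/
def map (f : ℕ → ℕ) : OutColor → OutColor
  | .black k => .black (f k)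
  | .white K => .white (K.image f)

/-- Removal of the completion code 0 (used by the end rule of sequences). -/
def remove0 : OutColor → OutColor
  | .black k => if k = 0 then .white ∅ else .black k
  | .white K => .white (K.erase 0)

end OutColor

/-- Completion-code shift `↑` used by the `shift` statement. -/
def kup (k : ℕ) : ℕ := if 2 ≤ k then k + 1 else k

/-- Completion-code decrement `↓` used by the `trap` statement. -/
def kdown (k : ℕ) : ℕ := if k < 2 then k else if k = 2 then 0 else k - 1

mutual

/-- A microstate: a microstate body decorated with an input and an
output color. -/
inductive MState : Type
  | node (ic : InColor) (b : MBody) (oc : OutColor)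

/-- Bodies of microstates: loop-free Kernel Esterel statements whose
sub-statements are microstates. -/
inductive MBody : Type
  | nothing
  | pause
  | exit (k : ℕ)
  | emit (s : Signal)
  | awaitImm (s : Signal)
  | trap (p : MState)
  | shift (p : MState)
  | suspend (s : Signal) (p : MState)
  | present (s : Signal) (p q : MState)
  | seq (p q : MState)
  | par (p q : MState)
  | sig (s : Signal) (p : MState)

end

namespace MState

/-- The input color of a microstate. -/
def ic : MState → InColor
  | .node i _ _ => i

/-- The body of a microstate. -/
def body : MState → MBody
  | .node _ b _ => b

/-- The output color of a microstate. -/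
def oc : MState → OutColor
  | .node _ _ o => o

/-- Replace the input color of a microstate. -/
def setIC : MState → InColor → MState
  | .node _ b o, i => .node i b o

/-- Replace the Go wire of a microstate. -/
def setGo (p : MState) (g : SB) : MState := p.setIC { p.ic with go := g }

/-- Replace the Res wire of a microstate. -/
def setRes (p : MState) (r : SB) : MState := p.setIC { p.ic with res := r }

/-- Replace the Susp wire of a microstate. -/
def setSusp (p : MState) (v : SB) : MState := p.setIC { p.ic with susp := v }

/-- Replace the output color of a microstate. -/
def setOC : MState → OutColor → MState
  | .node i b _, o => .node i b o

/-- The Sel wire as a Scott boolean. -/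
def selSB (p : MState) : SB := if p.ic.sel then .pos else .neg

end MState

mutual

/-- The status of the emitters of `s` inside a microstate: `+` if some emitter
of `s` has fired, `−` if all emitters of `s` are dead, `⊥` otherwise. -/
def MState.emitStatus (s : Signal) : MState → SB
  | .node _ b o => MBody.emitStatus s o b

/-- Auxiliary emitter status on bodies (the output color of the node is passed
for the `emit` case). -/
def MBody.emitStatus (s : Signal) (o : OutColor) : MBody → SB
  | .nothing => .neg
  | .pause => .neg
  | .exit _ => .neg
  | .awaitImm _ => .neg
  | .emit s' =>
      if s' = s then
        match o with
        | .black _ => .pos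
        | .white K => if K = ∅ then .neg else .bot
      else .neg
  | .trap p => p.emitStatus s
  | .shift p => p.emitStatus s
  | .suspend _ p => p.emitStatus s
  | .present _ p q => (p.emitStatus s).or (q.emitStatus s)
  | .seq p q => (p.emitStatus s).or (q.emitStatus s)
  | .par p q => (p.emitStatus s).or (q.emitStatus s)
  | .sig s' p => if s' = s then .neg else p.emitStatus s

end

/-- The `SuspNow` function computing the output color of a `suspend`
statement from the (Scott-boolean) suspension condition and the output color
of its body. -/
def suspNow : SB → OutColor → OutColor
  | .neg, o => o
  | .pos, .white K => if K = ∅ then .black 1 else .white (insert 1 (K.erase 0))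
  | .pos, .black k => .black (max 1 k)
  | .bot, .black 0 => .white {0, 1}
  | .bot, o => OutColor.union (.white {1}) o

/-- The (specification of the) parallel synchronizer: if one branch is dead
(`∘∅`) return the other output, otherwise take the max of the completion
codes. -/
def synchronize (o₁ o₂ : OutColor) : OutColor :=
  match o₁, o₂ with
  | .white K, .white L =>
      if K = ∅ then .white L
      else if L = ∅ then .white K
      else .white (K.biUnion fun k => L.image (max k))
  | .white K, .black k =>
      if K = ∅ then .black k else .white (K.image (max k))
  | .black k, .white L =>
      if L = ∅ then .black k else .white (L.image (max k))
  | .black k, .black l => .black (max k l)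

open InColor OutColor

/-- The microstep semantics: `Micro E p p'` means `E ⊢ p ⇝ p'`. -/
inductive Micro : CEvent → MState → MState → Prop
  -- rules for nothing
  | nothing_dead {E : CEvent} {i : InColor} (h : i.isNoGo) :
      Micro E (.node i .nothing (.white {0})) (.node i .nothing (.white ∅))
  | nothing_go {E : CEvent} {i : InColor} (h : i.isGo) :
      Micro E (.node i .nothing (.white {0})) (.node i .nothing (.black 0))
  -- rules for exit
  | exit_dead {E : CEvent} {i : InColor} {n : ℕ} (h : i.isNoGo) :
      Micro E (.node i (.exit n) (.white {n + 2})) (.node i (.exit n) (.white ∅))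
  | exit_go {E : CEvent} {i : InColor} {n : ℕ} (h : i.isGo) :
      Micro E (.node i (.exit n) (.white {n + 2})) (.node i (.exit n) (.black (n + 2)))
  -- rules for emit
  | emit_dead {E : CEvent} {i : InColor} {s : Signal} (h : i.isNoGo) :
      Micro E (.node i (.emit s) (.white {0})) (.node i (.emit s) (.white ∅))
  | emit_go {E : CEvent} {i : InColor} {s : Signal} (h : i.isGo) :
      Micro E (.node i (.emit s) (.white {0})) (.node i (.emit s) (.black 0))
  -- rules for pause
  | pause_no0 {E : CEvent} {i : InColor} {K : Finset ℕ}
      (h : i.res = .neg ∨ i.sel = false) (h0 : 0 ∈ K) :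
      Micro E (.node i .pause (.white K)) (.node i .pause (.white (K.erase 0)))
  | pause_no1 {E : CEvent} {i : InColor} {K : Finset ℕ}
      (h : i.go = .neg) (h1 : 1 ∈ K) :
      Micro E (.node i .pause (.white K)) (.node i .pause (.white (K.erase 1)))
  | pause_go {E : CEvent} {i : InColor} {o : OutColor}
      (h : i.go = .pos) (ho : o.lt (.black 1)) :
      Micro E (.node i .pause o) (.node i .pause (.black 1))
  | pause_res {E : CEvent} {i : InColor} {o : OutColor}
      (h : i.isRes) (ho : o.lt (.black 0)) :
      Micro E (.node i .pause o) (.node i .pause (.black 0))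
  -- rules for await immediate
  | await_no0 {E : CEvent} {i : InColor} {s : Signal} {K : Finset ℕ}
      (h : i.nogores ∨ evalE E s = .neg) (h0 : 0 ∈ K) :
      Micro E (.node i (.awaitImm s) (.white K))
        (.node i (.awaitImm s) (.white (K.erase 0)))
  | await_no1 {E : CEvent} {i : InColor} {s : Signal} {K : Finset ℕ}
      (h : i.nogores ∨ evalE E s = .pos) (h1 : 1 ∈ K) :
      Micro E (.node i (.awaitImm s) (.white K))
        (.node i (.awaitImm s) (.white (K.erase 1)))
  | await_pause {E : CEvent} {i : InColor} {s : Signal} {o : OutColor}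
      (h : i.gores) (hs : evalE E s = .neg) (ho : o.lt (.black 1)) :
      Micro E (.node i (.awaitImm s) o) (.node i (.awaitImm s) (.black 1))
  | await_done {E : CEvent} {i : InColor} {s : Signal} {o : OutColor}
      (h : i.gores) (hs : evalE E s = .pos) (ho : o.lt (.black 0)) :
      Micro E (.node i (.awaitImm s) o) (.node i (.awaitImm s) (.black 0))
  -- rules for trap
  | trap_start {E : CEvent} {i : InColor} {o : OutColor} {p : MState}
      (h : p.ic.lt i) :
      Micro E (.node i (.trap p) o) (.node i (.trap (p.setIC i)) o)
  | trap_ctx {E : CEvent} {i : InColor} {o : OutColor} {p p' : MState}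
      (h : Micro E p p') :
      Micro E (.node i (.trap p) o) (.node i (.trap p') o)
  | trap_end {E : CEvent} {i : InColor} {o : OutColor} {p : MState}
      (h : o.lt (p.oc.map kdown)) :
      Micro E (.node i (.trap p) o) (.node i (.trap p) (p.oc.map kdown))
  -- rules for shift
  | shift_start {E : CEvent} {i : InColor} {o : OutColor} {p : MState}
      (h : p.ic.lt i) :
      Micro E (.node i (.shift p) o) (.node i (.shift (p.setIC i)) o)
  | shift_ctx {E : CEvent} {i : InColor} {o : OutColor} {p p' : MState}
      (h : Micro E p p') :
      Micro E (.node i (.shift p) o) (.node i (.shift p') o)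
  | shift_end {E : CEvent} {i : InColor} {o : OutColor} {p : MState}
      (h : o.lt (p.oc.map kup)) :
      Micro E (.node i (.shift p) o) (.node i (.shift p) (p.oc.map kup))
  -- rules for suspend
  | susp_go {E : CEvent} {i : InColor} {o : OutColor} {s : Signal} {p : MState}
      (h : p.ic.go.lt i.go) :
      Micro E (.node i (.suspend s p) o) (.node i (.suspend s (p.setGo i.go)) o)
  | susp_res {E : CEvent} {i : InColor} {o : OutColor} {s : Signal} {p : MState}
      (h : p.ic.res.lt (i.res.and (p.selSB.and (evalE E s).not))) :
      Micro E (.node i (.suspend s p) o)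
        (.node i (.suspend s (p.setRes (i.res.and (p.selSB.and (evalE E s).not)))) o)
  | susp_susp {E : CEvent} {i : InColor} {o : OutColor} {s : Signal} {p : MState}
      (h : p.ic.susp.lt (i.susp.or (i.res.and (p.selSB.and (evalE E s))))) :
      Micro E (.node i (.suspend s p) o)
        (.node i (.suspend s (p.setSusp (i.susp.or (i.res.and (p.selSB.and (evalE E s)))))) o)
  | susp_ctx {E : CEvent} {i : InColor} {o : OutColor} {s : Signal} {p p' : MState}
      (h : Micro E p p') :
      Micro E (.node i (.suspend s p) o) (.node i (.suspend s p') o)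
  | susp_end_bot {E : CEvent} {i : InColor} {o : OutColor} {s : Signal} {p : MState}
      (h : o.lt (suspNow .bot p.oc)) :
      Micro E (.node i (.suspend s p) o) (.node i (.suspend s p) (suspNow .bot p.oc))
  | susp_end {E : CEvent} {i : InColor} {o : OutColor} {s : Signal} {p : MState}
      (h : o.lt (suspNow (i.susp.or (i.res.and (p.selSB.and (evalE E s)))) p.oc)) :
      Micro E (.node i (.suspend s p) o)
        (.node i (.suspend s p) (suspNow (i.susp.or (i.res.and (p.selSB.and (evalE E s)))) p.oc))
  -- rules for present (test)
  | if_goL {E : CEvent} {i : InColor} {o : OutColor} {s : Signal} {p q : MState}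
      (h : p.ic.go.lt (i.go.and (evalE E s))) :
      Micro E (.node i (.present s p q) o)
        (.node i (.present s (p.setGo (i.go.and (evalE E s))) q) o)
  | if_goR {E : CEvent} {i : InColor} {o : OutColor} {s : Signal} {p q : MState}
      (h : q.ic.go.lt (i.go.and (evalE E s).not)) :
      Micro E (.node i (.present s p q) o)
        (.node i (.present s p (q.setGo (i.go.and (evalE E s).not))) o)
  | if_resL {E : CEvent} {i : InColor} {o : OutColor} {s : Signal} {p q : MState}
      (h : p.ic.res.lt i.res) :
      Micro E (.node i (.present s p q) o) (.node i (.present s (p.setRes i.res) q) o)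
  | if_resR {E : CEvent} {i : InColor} {o : OutColor} {s : Signal} {p q : MState}
      (h : q.ic.res.lt i.res) :
      Micro E (.node i (.present s p q) o) (.node i (.present s p (q.setRes i.res)) o)
  | if_suspL {E : CEvent} {i : InColor} {o : OutColor} {s : Signal} {p q : MState}
      (h : p.ic.susp.lt i.susp) :
      Micro E (.node i (.present s p q) o) (.node i (.present s (p.setSusp i.susp) q) o)
  | if_suspR {E : CEvent} {i : InColor} {o : OutColor} {s : Signal} {p q : MState}
      (h : q.ic.susp.lt i.susp) :
      Micro E (.node i (.present s p q) o) (.node i (.present s p (q.setSusp i.susp)) o)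
  | if_ctxL {E : CEvent} {i : InColor} {o : OutColor} {s : Signal} {p p' q : MState}
      (h : Micro E p p') :
      Micro E (.node i (.present s p q) o) (.node i (.present s p' q) o)
  | if_ctxR {E : CEvent} {i : InColor} {o : OutColor} {s : Signal} {p q q' : MState}
      (h : Micro E q q') :
      Micro E (.node i (.present s p q) o) (.node i (.present s p q') o)
  | if_end {E : CEvent} {i : InColor} {o : OutColor} {s : Signal} {p q : MState}
      (h : o.lt (p.oc.union q.oc)) :
      Micro E (.node i (.present s p q) o) (.node i (.present s p q) (p.oc.union q.oc))
  -- rules for sequence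
  | seq_start {E : CEvent} {i : InColor} {o : OutColor} {p q : MState}
      (h : p.ic.lt i) :
      Micro E (.node i (.seq p q) o) (.node i (.seq (p.setIC i) q) o)
  | seq_res {E : CEvent} {i : InColor} {o : OutColor} {p q : MState}
      (h : q.ic.res.lt i.res) :
      Micro E (.node i (.seq p q) o) (.node i (.seq p (q.setRes i.res)) o)
  | seq_susp {E : CEvent} {i : InColor} {o : OutColor} {p q : MState}
      (h : q.ic.susp.lt i.susp) :
      Micro E (.node i (.seq p q) o) (.node i (.seq p (q.setSusp i.susp)) o)
  | seq_goP {E : CEvent} {i : InColor} {o : OutColor} {p q : MState}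
      (h : p.oc = .black 0) (hq : q.ic.go = .bot) :
      Micro E (.node i (.seq p q) o) (.node i (.seq p (q.setGo .pos)) o)
  | seq_goM {E : CEvent} {i : InColor} {o : OutColor} {p q : MState}
      (h : ¬ p.oc.le (.black 0)) (hq : q.ic.go = .bot) :
      Micro E (.node i (.seq p q) o) (.node i (.seq p (q.setGo .neg)) o)
  | seq_ctxL {E : CEvent} {i : InColor} {o : OutColor} {p p' q : MState}
      (h : Micro E p p') :
      Micro E (.node i (.seq p q) o) (.node i (.seq p' q) o)
  | seq_ctxR {E : CEvent} {i : InColor} {o : OutColor} {p q q' : MState}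
      (h : Micro E q q') :
      Micro E (.node i (.seq p q) o) (.node i (.seq p q') o)
  | seq_end {E : CEvent} {i : InColor} {o : OutColor} {p q : MState}
      (h : o.lt (p.oc.remove0.union q.oc)) :
      Micro E (.node i (.seq p q) o) (.node i (.seq p q) (p.oc.remove0.union q.oc))
  -- rules for parallel
  | par_startL {E : CEvent} {i : InColor} {o : OutColor} {p q : MState}
      (h : p.ic.lt i) :
      Micro E (.node i (.par p q) o) (.node i (.par (p.setIC i) q) o)
  | par_startR {E : CEvent} {i : InColor} {o : OutColor} {p q : MState}
      (h : q.ic.lt i) :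
      Micro E (.node i (.par p q) o) (.node i (.par p (q.setIC i)) o)
  | par_ctxL {E : CEvent} {i : InColor} {o : OutColor} {p p' q : MState}
      (h : Micro E p p') :
      Micro E (.node i (.par p q) o) (.node i (.par p' q) o)
  | par_ctxR {E : CEvent} {i : InColor} {o : OutColor} {p q q' : MState}
      (h : Micro E q q') :
      Micro E (.node i (.par p q) o) (.node i (.par p q') o)
  | par_end {E : CEvent} {i : InColor} {o : OutColor} {p q : MState}
      (h : o.lt (synchronize p.oc q.oc)) :
      Micro E (.node i (.par p q) o) (.node i (.par p q) (synchronize p.oc q.oc))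
  -- rules for local signal declaration
  | sig_start {E : CEvent} {i : InColor} {o : OutColor} {s : Signal} {p : MState}
      (h : p.ic.lt i) :
      Micro E (.node i (.sig s p) o) (.node i (.sig s (p.setIC i)) o)
  | sig_ctx {E : CEvent} {i : InColor} {o : OutColor} {s : Signal} {p p' : MState}
      (h : Micro (E.update s (p.emitStatus s)) p p') :
      Micro E (.node i (.sig s p) o) (.node i (.sig s p') o)
  | sig_end {E : CEvent} {i : InColor} {o : OutColor} {s : Signal} {p : MState}
      (h : o.lt p.oc) :
      Micro E (.node i (.sig s p) o) (.node i (.sig s p) p.oc)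

end EsterelMicro

namespace EsterelMicro

mutual

/-- A microstate is total when no Go, Res, or Susp wire in it is ⊥ and every
output color in it is either `∘∅` or some `•k`. -/
def MState.Total : MState → Prop
  | .node i b o =>
      i.go ≠ .bot ∧ i.res ≠ .bot ∧ i.susp ≠ .bot ∧
      (o = .white ∅ ∨ ∃ k, o = .black k) ∧ MBody.Total b

/-- Totality of microstate bodies. -/
def MBody.Total : MBody → Prop
  | .nothing => True
  | .pause => True
  | .exit _ => True
  | .emit _ => True
  | .awaitImm _ => True
  | .trap p => p.Total
  | .shift p => p.Total
  | .suspend _ p => p.Total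
  | .present _ p q => p.Total ∧ q.Total
  | .seq p q => p.Total ∧ q.Total
  | .par p q => p.Total ∧ q.Total
  | .sig _ p => p.Total

end

lemma not_lt_of_total_oc {o t : OutColor}
    (h : o = .white ∅ ∨ ∃ k, o = .black k) : ¬ o.lt t := by
  rintro ⟨hle, hne⟩
  rcases h with rfl | ⟨k, rfl⟩ <;> cases t <;>
    simp only [OutColor.le, Finset.subset_empty, Finset.notMem_empty] at hle <;>
    first
      | exact hle
      | (subst hle; exact hne rfl)

lemma sb_not_lt {a b : SB} (h : a ≠ .bot) : ¬ a.lt b := fun hh => h hh.1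

lemma not_ic_lt {j i : InColor} (hg : j.go ≠ .bot) (hr : j.res ≠ .bot)
    (hs : j.susp ≠ .bot) : ¬ j.lt i := by
  rintro ⟨⟨hsel, hgo, hres, hsusp⟩, hne⟩
  apply hne
  rcases hgo with h1 | h1; · exact absurd h1 hg
  rcases hres with h2 | h2; · exact absurd h2 hr
  rcases hsusp with h3 | h3; · exact absurd h3 hs
  cases j; cases i; simp_all

lemma total_go {p : MState} (h : p.Total) : p.ic.go ≠ .bot := by
  cases p; exact h.1

lemma total_res {p : MState} (h : p.Total) : p.ic.res ≠ .bot := by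
  cases p; exact h.2.1

lemma total_susp {p : MState} (h : p.Total) : p.ic.susp ≠ .bot := by
  cases p; exact h.2.2.1

lemma total_not_ic_lt {p : MState} {i : InColor} (h : p.Total) : ¬ p.ic.lt i := by
  cases p; exact not_ic_lt h.1 h.2.1 h.2.2.1

lemma micro_not_total : ∀ {E : CEvent} {p p' : MState}, Micro E p p' → ¬ p.Total := by
  intro E p p' h
  induction h <;> intro total <;>
    simp only [MState.Total, MBody.Total] at total <;>
    obtain ⟨hg, hr, hs, ho, hb⟩ := total
  case nothing_dead | nothing_go | exit_dead | exit_go | emit_dead | emit_go =>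
    rcases ho with ho | ⟨k, ho⟩ <;> simp at ho
  case pause_no0 h h0 | pause_no1 h h0 | await_no0 _ h h0 | await_no1 _ h h0 =>
    rcases ho with ho | ⟨k, ho⟩ <;> simp at ho
    subst ho; simp at h0
  case pause_go h ho' | pause_res h ho' | await_pause _ h _ ho' | await_done _ h _ ho' =>
    exact not_lt_of_total_oc ho ho'
  case trap_start h | shift_start h | seq_start _ h | par_startL _ h | sig_start _ h =>
    first | exact total_not_ic_lt hb h | exact total_not_ic_lt hb.1 h
  case par_startR h =>
    exact total_not_ic_lt hb.2 h
  case trap_ctx ih | shift_ctx ih | susp_ctx _ ih | sig_ctx _ ih | seq_ctxL _ ih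
      | if_ctxL _ ih =>
    first | exact ih hb | exact ih hb.1
  case seq_ctxR _ ih | if_ctxR _ ih | par_ctxL _ ih | par_ctxR _ ih =>
    first | exact ih hb.1 | exact ih hb.2
  case trap_end h | shift_end h | susp_end_bot _ h | susp_end _ h | if_end _ h
      | seq_end h | par_end h | sig_end _ h =>
    exact not_lt_of_total_oc ho h
  case susp_go h | susp_res h | susp_susp h =>
    first
      | exact sb_not_lt (total_go hb) h
      | exact sb_not_lt (total_res hb) h
      | exact sb_not_lt (total_susp hb) h
  case if_goL _ h | if_resL _ h | if_suspL _ h =>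
    first
      | exact sb_not_lt (total_go hb.1) h
      | exact sb_not_lt (total_res hb.1) h
      | exact sb_not_lt (total_susp hb.1) h
  case if_goR _ h | if_resR _ h | if_suspR _ h | seq_res h | seq_susp h =>
    first
      | exact sb_not_lt (total_go hb.2) h
      | exact sb_not_lt (total_res hb.2) h
      | exact sb_not_lt (total_susp hb.2) h
  case seq_goP _ hq | seq_goM _ hq =>
    exact total_go hb.2 hq

/-- **Total microstates are irreducible**: a total microstate admits no
microstep. -/
theorem total_microstate_irreducible :
    ∀ (E : CEvent) (p : MState), p.Total → ¬ ∃ p', Micro E p p' := by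
  rintro E p hp ⟨p', h⟩
  exact micro_not_total h hp

end EsterelMicro
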